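/- arXiv:0909.3363 — 2 statements merged into one kernel-verified Lean document; each statement's English description precedes it below -/
import Mathlib

section
/- Let {φ(θ), θ ∈ T_0} be an admissible family of nonnegative random variables which is right continuous along stopping times in expectation and satisfies E[ess sup_{θ ∈ T_0} φ(θ)] < ∞. Then the value-function family {v(S), S ∈ T_0}, where v(S) = ess sup_{θ ∈ T_S} E[φ(θ) | F_S], is right continuous along stopping times in expectation: for any S ∈ T_0 and any sequence of stopping times S_n ↓ S a.s., one has E[v(S_n)] → E[v(S)]. -/
/-!
Write `u(S) = sup_{θ ∈ T_S} E[φ(θ)]` (`optimalValue`). The family `{E[φ(θ) | F_S], θ ∈ T_S}`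
is directed upward: pasting two stopping times along the `F_S`-set where one conditional
expectation dominates the other realises their maximum. Hence its essential supremum `v(S)` is the a.s. limit of an
increasing sequence of its members, and monotone convergence gives `E[v(S)] = u(S)`.
Right continuity of `u` is then elementary: `u(S_n) ≤ u(S)` because `T_{S_n} ⊆ T_S`, and for a
nearly optimal `θ ∈ T_S` the times `θ ∨ S_n ∈ T_{S_n}` decrease to `θ`, so right continuity of
`φ` gives `liminf u(S_n) ≥ E[φ(θ)]`.
-/

open MeasureTheory Filter Set Topology

variable {Ω : Type*}

/-- `τ` belongs to `T_0`: it is a stopping time of `𝓕` with values in `[0, T]`. -/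
def MemT0 {m0 : MeasurableSpace Ω} (𝓕 : MeasureTheory.Filtration ℝ m0) (T : ℝ)
    (τ : Ω → ℝ) : Prop :=
  MeasureTheory.IsStoppingTime 𝓕 (fun ω => (τ ω : WithTop ℝ)) ∧ ∀ ω, τ ω ∈ Set.Icc (0 : ℝ) T

/-- `v` is an essential supremum of the family `f i`, `i` ranging over `{i | P i}`:
it dominates every member a.s. and is a.s. below any other a.s. upper bound. -/
def IsEssSupFam {m0 : MeasurableSpace Ω} (μ : MeasureTheory.Measure Ω) {ι : Sort*}
    (P : ι → Prop) (f : ι → Ω → ℝ) (v : Ω → ℝ) : Prop :=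
  (∀ i, P i → f i ≤ᵐ[μ] v) ∧ ∀ w : Ω → ℝ, (∀ i, P i → f i ≤ᵐ[μ] w) → v ≤ᵐ[μ] w

/-- `v` is an essential infimum of the family `f i`, `i` ranging over `{i | P i}`. -/
def IsEssInfFam {m0 : MeasurableSpace Ω} (μ : MeasureTheory.Measure Ω) {ι : Sort*}
    (P : ι → Prop) (f : ι → Ω → ℝ) (v : Ω → ℝ) : Prop :=
  (∀ i, P i → v ≤ᵐ[μ] f i) ∧ ∀ w : Ω → ℝ, (∀ i, P i → w ≤ᵐ[μ] f i) → w ≤ᵐ[μ] v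

/-- An admissible family of nonnegative random variables indexed by the stopping
times in `T_0`: `φ τ` is a nonnegative `F_τ`-measurable random variable, and
`φ τ = φ τ'` a.s. on `{τ = τ'}`. -/
def Admissible {m0 : MeasurableSpace Ω} (𝓕 : MeasureTheory.Filtration ℝ m0) (T : ℝ)
    (μ : MeasureTheory.Measure Ω) (φ : (Ω → ℝ) → Ω → ℝ) : Prop :=
  (∀ τ (hτ : MemT0 𝓕 T τ),
      Measurable[hτ.1.measurableSpace] (φ τ) ∧ ∀ ω, 0 ≤ φ τ ω) ∧
  ∀ τ τ', MemT0 𝓕 T τ → MemT0 𝓕 T τ' →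
    ∀ᵐ ω ∂μ, τ ω = τ' ω → φ τ ω = φ τ' ω

/-- An a.e. variant of admissibility (for families defined only up to a.s. equality,
such as value-function families): `φ τ` is a.s. nonnegative and a.s. equal to some
`F_τ`-measurable random variable, and `φ τ = φ τ'` a.s. on `{τ = τ'}`. -/
def AdmissibleAE {m0 : MeasurableSpace Ω} (𝓕 : MeasureTheory.Filtration ℝ m0) (T : ℝ)
    (μ : MeasureTheory.Measure Ω) (φ : (Ω → ℝ) → Ω → ℝ) : Prop :=
  (∀ τ (hτ : MemT0 𝓕 T τ),
      (∀ᵐ ω ∂μ, 0 ≤ φ τ ω) ∧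
      ∃ w : Ω → ℝ, Measurable[hτ.1.measurableSpace] w ∧ φ τ =ᵐ[μ] w) ∧
  ∀ τ τ', MemT0 𝓕 T τ → MemT0 𝓕 T τ' →
    ∀ᵐ ω ∂μ, τ ω = τ' ω → φ τ ω = φ τ' ω

/-- A biadmissible family: `ψ τ S` is a nonnegative `F_{τ ∨ S}`-measurable random
variable, and `ψ τ S = ψ τ' S'` a.s. on `{τ = τ'} ∩ {S = S'}`. -/
def Biadmissible {m0 : MeasurableSpace Ω} (𝓕 : MeasureTheory.Filtration ℝ m0) (T : ℝ)
    (μ : MeasureTheory.Measure Ω) (ψ : (Ω → ℝ) → (Ω → ℝ) → Ω → ℝ) : Prop :=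
  (∀ τ S (hτ : MemT0 𝓕 T τ) (hS : MemT0 𝓕 T S),
      Measurable[(hτ.1.max hS.1).measurableSpace] (ψ τ S) ∧ ∀ ω, 0 ≤ ψ τ S ω) ∧
  ∀ τ τ' S S', MemT0 𝓕 T τ → MemT0 𝓕 T τ' → MemT0 𝓕 T S → MemT0 𝓕 T S' →
    ∀ᵐ ω ∂μ, τ ω = τ' ω → S ω = S' ω → ψ τ S ω = ψ τ' S' ω

/-- `θn ↓ θ` a.s.: the sequence is a.s. nonincreasing and converges a.s. to `θ`. -/
def DownAS {m0 : MeasurableSpace Ω} (μ : MeasureTheory.Measure Ω)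
    (θn : ℕ → Ω → ℝ) (θ : Ω → ℝ) : Prop :=
  ∀ᵐ ω ∂μ, (∀ n, θn (n + 1) ω ≤ θn n ω) ∧
    Filter.Tendsto (fun n => θn n ω) Filter.atTop (nhds (θ ω))

/-- `θn ↑ θ` a.s.: the sequence is a.s. nondecreasing and converges a.s. to `θ`. -/
def UpAS {m0 : MeasurableSpace Ω} (μ : MeasureTheory.Measure Ω)
    (θn : ℕ → Ω → ℝ) (θ : Ω → ℝ) : Prop :=
  ∀ᵐ ω ∂μ, (∀ n, θn n ω ≤ θn (n + 1) ω) ∧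
    Filter.Tendsto (fun n => θn n ω) Filter.atTop (nhds (θ ω))

/-- The family `φ` is right continuous along stopping times in expectation. -/
def RCE {m0 : MeasurableSpace Ω} (𝓕 : MeasureTheory.Filtration ℝ m0) (T : ℝ)
    (μ : MeasureTheory.Measure Ω) (φ : (Ω → ℝ) → Ω → ℝ) : Prop :=
  ∀ θ, MemT0 𝓕 T θ → ∀ θn : ℕ → Ω → ℝ, (∀ n, MemT0 𝓕 T (θn n)) → DownAS μ θn θ →
    Filter.Tendsto (fun n => ∫ ω, φ (θn n) ω ∂μ) Filter.atTop (nhds (∫ ω, φ θ ω ∂μ))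

/-- The family `φ` is left continuous along stopping times in expectation. -/
def LCE {m0 : MeasurableSpace Ω} (𝓕 : MeasureTheory.Filtration ℝ m0) (T : ℝ)
    (μ : MeasureTheory.Measure Ω) (φ : (Ω → ℝ) → Ω → ℝ) : Prop :=
  ∀ θ, MemT0 𝓕 T θ → ∀ θn : ℕ → Ω → ℝ, (∀ n, MemT0 𝓕 T (θn n)) → UpAS μ θn θ →
    Filter.Tendsto (fun n => ∫ ω, φ (θn n) ω ∂μ) Filter.atTop (nhds (∫ ω, φ θ ω ∂μ))

/-- The biadmissible family `ψ` is uniformly right continuous in expectation along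
stopping times: for `S_n ↓ S` a.s. (all in `T_0`), the expectation of the essential
supremum over `θ ∈ T_0` of `|ψ(θ, S) - ψ(θ, S_n)|` (resp. `|ψ(S, θ) - ψ(S_n, θ)|`)
tends to `0`. -/
def URCE {m0 : MeasurableSpace Ω} (𝓕 : MeasureTheory.Filtration ℝ m0) (T : ℝ)
    (μ : MeasureTheory.Measure Ω) (ψ : (Ω → ℝ) → (Ω → ℝ) → Ω → ℝ) : Prop :=
  ∀ S, MemT0 𝓕 T S → ∀ Sn : ℕ → Ω → ℝ, (∀ n, MemT0 𝓕 T (Sn n)) → DownAS μ Sn S →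
    (∀ D : ℕ → Ω → ℝ,
      (∀ n, IsEssSupFam μ (MemT0 𝓕 T) (fun θ ω => |ψ θ S ω - ψ θ (Sn n) ω|) (D n)) →
      Filter.Tendsto (fun n => ∫ ω, D n ω ∂μ) Filter.atTop (nhds 0)) ∧
    ∀ D : ℕ → Ω → ℝ,
      (∀ n, IsEssSupFam μ (MemT0 𝓕 T) (fun θ ω => |ψ S θ ω - ψ (Sn n) θ ω|) (D n)) →
      Filter.Tendsto (fun n => ∫ ω, D n ω ∂μ) Filter.atTop (nhds 0)

/-- The biadmissible family `ψ` is uniformly left continuous in expectation along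
stopping times. -/
def ULCE {m0 : MeasurableSpace Ω} (𝓕 : MeasureTheory.Filtration ℝ m0) (T : ℝ)
    (μ : MeasureTheory.Measure Ω) (ψ : (Ω → ℝ) → (Ω → ℝ) → Ω → ℝ) : Prop :=
  ∀ S, MemT0 𝓕 T S → ∀ Sn : ℕ → Ω → ℝ, (∀ n, MemT0 𝓕 T (Sn n)) → UpAS μ Sn S →
    (∀ D : ℕ → Ω → ℝ,
      (∀ n, IsEssSupFam μ (MemT0 𝓕 T) (fun θ ω => |ψ θ S ω - ψ θ (Sn n) ω|) (D n)) →
      Filter.Tendsto (fun n => ∫ ω, D n ω ∂μ) Filter.atTop (nhds 0)) ∧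
    ∀ D : ℕ → Ω → ℝ,
      (∀ n, IsEssSupFam μ (MemT0 𝓕 T) (fun θ ω => |ψ S θ ω - ψ (Sn n) θ ω|) (D n)) →
      Filter.Tendsto (fun n => ∫ ω, D n ω ∂μ) Filter.atTop (nhds 0)

theorem DirectedOn.exists_chain_above_seq {ι : Type*} {r : ι → ι → Prop} {s : Set ι}
    (hs : DirectedOn r s) {θ : ℕ → ι} (hθ : ∀ n, θ n ∈ s) :
    ∃ τ : ℕ → ι, (∀ n, τ n ∈ s) ∧ (∀ n, r (θ n) (τ n)) ∧ ∀ n, r (τ n) (τ (n + 1)) := by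
  have : Nonempty ι := ⟨θ 0⟩
  choose! ub hub_mem hub_left hub_right using hs
  let τ : ℕ → ι := fun n => Nat.rec (ub (θ 0) (θ 0)) (fun n t => ub t (θ (n + 1))) n
  have hτ : ∀ n, τ n ∈ s := by
    intro n
    induction n with
    | zero => exact hub_mem _ (hθ 0) _ (hθ 0)
    | succ n ih => exact hub_mem _ ih _ (hθ (n + 1))
  refine ⟨τ, hτ, fun n => ?_, fun n => hub_left _ (hτ n) _ (hθ (n + 1))⟩
  cases n with
  | zero => exact hub_left _ (hθ 0) _ (hθ 0)
  | succ n => exact hub_right _ (hτ n) _ (hθ (n + 1))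

section DirectedEssSup

variable {ι : Type*} {m0 : MeasurableSpace Ω} {μ : Measure Ω}

theorem ae_tendsto_iSup_of_ae_monotone {F : ℕ → Ω → ℝ} {W : Ω → ℝ}
    (hmono : ∀ n, F n ≤ᵐ[μ] F (n + 1)) (hFW : ∀ n, F n ≤ᵐ[μ] W) :
    ∀ᵐ ω ∂μ, Tendsto (fun n => F n ω) atTop (𝓝 (⨆ n, F n ω)) := by
  filter_upwards [ae_all_iff.2 hmono, ae_all_iff.2 hFW] with ω hω hωW
  exact tendsto_atTop_ciSup (monotone_nat_of_le_succ hω) ⟨W ω, by rintro _ ⟨n, rfl⟩; exact hωW n⟩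

theorem integrable_iSup_of_ae_monotone {F : ℕ → Ω → ℝ} {W : Ω → ℝ}
    (hF : ∀ n, Integrable (F n) μ) (hmono : ∀ n, F n ≤ᵐ[μ] F (n + 1))
    (hW : Integrable W μ) (hFW : ∀ n, F n ≤ᵐ[μ] W) :
    Integrable (fun ω => ⨆ n, F n ω) μ := by
  refine integrable_of_le_of_le (aestronglyMeasurable_of_tendsto_ae _
    (fun n => (hF n).aestronglyMeasurable) (ae_tendsto_iSup_of_ae_monotone hmono hFW)) ?_ ?_
    (hF 0) hW
  · filter_upwards [ae_all_iff.2 hFW] with ω hω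
    exact le_ciSup ⟨W ω, by rintro _ ⟨n, rfl⟩; exact hω n⟩ 0
  · filter_upwards [ae_all_iff.2 hFW] with ω hω
    exact ciSup_le hω

variable {P : ι → Prop} {f : ι → Ω → ℝ}

/-- Merging any member `f i` into the sequence cannot raise the expectations, so `max (f i) g`
and `g` have the same integral. -/
theorem ae_le_of_tendsto_of_directedOn (hint : ∀ i, P i → Integrable (f i) μ)
    (hdir : DirectedOn (fun i j => f i ≤ᵐ[μ] f j) {i | P i})
    {τ : ℕ → ι} (hτ : ∀ n, P (τ n)) (hmono : ∀ n, f (τ n) ≤ᵐ[μ] f (τ (n + 1)))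
    {g : Ω → ℝ} (hg : Integrable g μ)
    (hlim : ∀ᵐ ω ∂μ, Tendsto (fun n => f (τ n) ω) atTop (𝓝 (g ω)))
    (hmax : ∀ i, P i → ∫ ω, f i ω ∂μ ≤ ∫ ω, g ω ∂μ) {i : ι} (hi : P i) :
    f i ≤ᵐ[μ] g := by
  have hmerge : ∀ n, ∫ ω, max (f i ω) (f (τ n) ω) ∂μ ≤ ∫ ω, g ω ∂μ := by
    intro n
    obtain ⟨k, hk, hik, hτk⟩ := hdir i hi (τ n) (hτ n)
    refine (integral_mono_ae ((hint i hi).sup (hint _ (hτ n))) (hint k hk) ?_).trans (hmax k hk)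
    filter_upwards [hik, hτk] with ω h₁ h₂
    exact max_le h₁ h₂
  have hsup : Integrable (fun ω => max (f i ω) (g ω)) μ := (hint i hi).sup hg
  have hle : ∫ ω, max (f i ω) (g ω) ∂μ ≤ ∫ ω, g ω ∂μ := by
    refine le_of_tendsto (integral_tendsto_of_tendsto_of_monotone
      (fun n => (hint i hi).sup (hint _ (hτ n))) hsup ?_ ?_) (Eventually.of_forall hmerge)
    · filter_upwards [ae_all_iff.2 hmono] with ω hω m n hmn
      exact max_le_max le_rfl (monotone_nat_of_le_succ hω hmn)
    · filter_upwards [hlim] with ω hω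
      exact tendsto_const_nhds.max hω
  have hg_eq : g =ᵐ[μ] fun ω => max (f i ω) (g ω) :=
    (integral_eq_iff_of_ae_le hg hsup (Eventually.of_forall fun ω => le_max_right _ _)).1
      (le_antisymm (integral_mono hg hsup fun ω => le_max_right _ _) hle)
  filter_upwards [hg_eq] with ω hω
  exact hω ▸ le_max_left _ _

theorem IsEssSupFam.integral_eq_sSup_of_directedOn {v W : Ω → ℝ} (hv : IsEssSupFam μ P f v)
    (hne : ∃ i, P i) (hint : ∀ i, P i → Integrable (f i) μ)
    (hdir : DirectedOn (fun i j => f i ≤ᵐ[μ] f j) {i | P i})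
    (hW : Integrable W μ) (hfW : ∀ i, P i → f i ≤ᵐ[μ] W) :
    ∫ ω, v ω ∂μ = sSup ((fun i => ∫ ω, f i ω ∂μ) '' {i | P i}) := by
  set c := sSup ((fun i => ∫ ω, f i ω ∂μ) '' {i | P i})
  have hbdd : BddAbove ((fun i => ∫ ω, f i ω ∂μ) '' {i | P i}) := by
    refine ⟨∫ ω, W ω ∂μ, ?_⟩
    rintro _ ⟨i, hi, rfl⟩
    exact integral_mono_ae (hint i hi) hW (hfW i hi)
  have hle_c : ∀ i, P i → ∫ ω, f i ω ∂μ ≤ c := fun i hi => le_csSup hbdd ⟨i, hi, rfl⟩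
  have happrox : ∀ n : ℕ, ∃ i, P i ∧ c - 1 / (n + 1) < ∫ ω, f i ω ∂μ := by
    intro n
    obtain ⟨_, ⟨i, hi, rfl⟩, hlt⟩ := exists_lt_of_lt_csSup (Set.Nonempty.image _ hne)
      (sub_lt_self c (Nat.one_div_pos_of_nat (α := ℝ) (n := n)))
    exact ⟨i, hi, hlt⟩
  choose θ hθ hθc using happrox
  obtain ⟨τ, hτ, hθτ, hτmono⟩ := hdir.exists_chain_above_seq hθ
  set g := fun ω => ⨆ n, f (τ n) ω
  have hg : Integrable g μ :=
    integrable_iSup_of_ae_monotone (fun n => hint _ (hτ n)) hτmono hW fun n => hfW _ (hτ n)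
  have hlim := ae_tendsto_iSup_of_ae_monotone hτmono fun n => hfW _ (hτ n)
  have hgc : ∫ ω, g ω ∂μ = c := by
    have hlow : Tendsto (fun n : ℕ => c - 1 / (n + 1)) atTop (𝓝 c) := by
      simpa using tendsto_const_nhds.sub (tendsto_one_div_add_atTop_nhds_zero_nat (𝕜 := ℝ))
    refine tendsto_nhds_unique (integral_tendsto_of_tendsto_of_monotone (fun n => hint _ (hτ n)) hg
      ((ae_all_iff.2 hτmono).mono fun ω hω => monotone_nat_of_le_succ hω) hlim) ?_
    refine tendsto_of_tendsto_of_tendsto_of_le_of_le hlow tendsto_const_nhds (fun n => ?_)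
      fun n => hle_c _ (hτ n)
    exact (hθc n).le.trans (integral_mono_ae (hint _ (hθ n)) (hint _ (hτ n)) (hθτ n))
  have hupper : ∀ i, P i → f i ≤ᵐ[μ] g := fun i hi =>
    ae_le_of_tendsto_of_directedOn hint hdir hτ hτmono hg hlim (fun j hj => hgc ▸ hle_c j hj) hi
  have hgv : g ≤ᵐ[μ] v := by
    filter_upwards [hlim, ae_all_iff.2 fun n => hv.1 _ (hτ n)] with ω hω hωv
    exact le_of_tendsto' hω hωv
  rw [integral_congr_ae ((hv.2 g hupper).antisymm hgv), hgc]

end DirectedEssSup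

theorem MeasureTheory.IsStoppingTime.piecewise_of_measurableSet {ι : Type*} [Preorder ι]
    {m0 : MeasurableSpace Ω} {𝒢 : Filtration ι m0} {σ τ η : Ω → WithTop ι} {s : Set Ω}
    [DecidablePred (· ∈ s)] (hσ : IsStoppingTime 𝒢 σ) (hτ : IsStoppingTime 𝒢 τ)
    (hη : IsStoppingTime 𝒢 η) (hστ : σ ≤ τ) (hση : σ ≤ η)
    (hs : MeasurableSet[hσ.measurableSpace] s) :
    IsStoppingTime 𝒢 (s.piecewise τ η) := by
  intro t
  have hset : {ω | s.piecewise τ η ω ≤ t} =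
      s ∩ {ω | σ ω ≤ t} ∩ {ω | τ ω ≤ t} ∪ sᶜ ∩ {ω | σ ω ≤ t} ∩ {ω | η ω ≤ t} := by
    ext ω
    by_cases hω : ω ∈ s
    · simpa [hω] using fun h => (hστ ω).trans h
    · simpa [hω] using fun h => (hση ω).trans h
  rw [hset]
  exact ((hs.2 t).inter (hτ t)).union ((hs.compl.2 t).inter (hη t))

section StoppingTimes

variable {m0 : MeasurableSpace Ω} {𝓕 : Filtration ℝ m0} {T : ℝ}

theorem MemT0.max {τ σ : Ω → ℝ} (hτ : MemT0 𝓕 T τ) (hσ : MemT0 𝓕 T σ) :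
    MemT0 𝓕 T fun ω => max (τ ω) (σ ω) :=
  ⟨by simpa only [WithTop.coe_max] using hτ.1.max hσ.1,
    fun ω => ⟨le_max_of_le_left (hτ.2 ω).1, max_le (hτ.2 ω).2 (hσ.2 ω).2⟩⟩

theorem MemT0.piecewise {S a b : Ω → ℝ} {A : Set Ω} [DecidablePred (· ∈ A)]
    (hS : MemT0 𝓕 T S) (ha : MemT0 𝓕 T a) (hb : MemT0 𝓕 T b) (hSa : S ≤ a) (hSb : S ≤ b)
    (hA : MeasurableSet[hS.1.measurableSpace] A) :
    MemT0 𝓕 T (A.piecewise a b) := by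
  refine ⟨?_, fun ω => ?_⟩
  · have := hS.1.piecewise_of_measurableSet ha.1 hb.1 (fun ω => WithTop.coe_le_coe.2 (hSa ω))
      (fun ω => WithTop.coe_le_coe.2 (hSb ω)) hA
    convert this using 2 with ω
    by_cases hω : ω ∈ A <;> simp [hω]
  · by_cases hω : ω ∈ A <;> simp [hω, ha.2 ω, hb.2 ω]

end StoppingTimes

theorem MeasureTheory.condExp_piecewise {α E : Type*} [NormedAddCommGroup E] [NormedSpace ℝ E]
    [CompleteSpace E] {m m0 : MeasurableSpace α} {μ : Measure α} {f g : α → E} {s : Set α}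
    [DecidablePred (· ∈ s)] (hf : Integrable f μ) (hg : Integrable g μ) (hm : m ≤ m0)
    (hs : MeasurableSet[m] s) :
    μ[s.piecewise f g | m] =ᵐ[μ] s.piecewise (μ[f | m]) (μ[g | m]) := by
  rw [← Set.indicator_add_compl_eq_piecewise, ← Set.indicator_add_compl_eq_piecewise]
  exact (condExp_add (hf.indicator (hm _ hs)) (hg.indicator (hm _ hs.compl)) m).trans
    ((condExp_indicator hf hs).add (condExp_indicator hg hs.compl))

section Admissible

variable {m0 : MeasurableSpace Ω} {μ : Measure Ω} {𝓕 : Filtration ℝ m0} {T : ℝ}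
  {φ : (Ω → ℝ) → Ω → ℝ}

theorem Admissible.integrable {Z : Ω → ℝ} (hφ : Admissible 𝓕 T μ φ)
    (hZ : IsEssSupFam μ (MemT0 𝓕 T) φ Z) (hZint : Integrable Z μ) {τ : Ω → ℝ}
    (hτ : MemT0 𝓕 T τ) : Integrable (φ τ) μ :=
  integrable_of_le_of_le ((hφ.1 τ hτ).1.mono hτ.1.measurableSpace_le le_rfl).aestronglyMeasurable
    (Eventually.of_forall (hφ.1 τ hτ).2) (hZ.1 τ hτ) (integrable_zero _ _ μ) hZint

theorem Admissible.ae_eq_piecewise (hφ : Admissible 𝓕 T μ φ) {τ a b : Ω → ℝ} {A : Set Ω}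
    [DecidablePred (· ∈ A)] (hτ : MemT0 𝓕 T τ) (ha : MemT0 𝓕 T a) (hb : MemT0 𝓕 T b)
    (hτab : τ =ᵐ[μ] A.piecewise a b) :
    φ τ =ᵐ[μ] A.piecewise (φ a) (φ b) := by
  filter_upwards [hφ.2 τ a hτ ha, hφ.2 τ b hτ hb, hτab] with ω hωa hωb hω
  by_cases hωA : ω ∈ A
  · simpa [hωA] using hωa (by simpa [hωA] using hω)
  · simpa [hωA] using hωb (by simpa [hωA] using hω)

/-- Paste `a` and `b` along the `F_S`-measurable set where `E[φ a | F_S] ≥ E[φ b | F_S]`. -/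
theorem Admissible.exists_condExp_eq_max (hφ : Admissible 𝓕 T μ φ)
    (hint : ∀ τ, MemT0 𝓕 T τ → Integrable (φ τ) μ) {S a b : Ω → ℝ} (hS : MemT0 𝓕 T S)
    (ha : MemT0 𝓕 T a) (hb : MemT0 𝓕 T b) (hSa : S ≤ᵐ[μ] a) (hSb : S ≤ᵐ[μ] b) :
    ∃ τ, (MemT0 𝓕 T τ ∧ S ≤ᵐ[μ] τ) ∧ μ[φ τ | hS.1.measurableSpace] =ᵐ[μ]
      fun ω => max (μ[φ a | hS.1.measurableSpace] ω) (μ[φ b | hS.1.measurableSpace] ω) := by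
  classical
  set m := hS.1.measurableSpace
  set A := {ω | μ[φ b | m] ω ≤ μ[φ a | m] ω}
  have hA : MeasurableSet[m] A :=
    measurableSet_le stronglyMeasurable_condExp.measurable stronglyMeasurable_condExp.measurable
  -- `S ≤ a` and `S ≤ b` hold only a.s., so `a ∨ S` and `b ∨ S` are pasted instead
  set τ := A.piecewise (fun ω => max (a ω) (S ω)) (fun ω => max (b ω) (S ω))
  have hτ : MemT0 𝓕 T τ := hS.piecewise (ha.max hS) (hb.max hS)
    (fun ω => le_max_right _ _) (fun ω => le_max_right _ _) hA
  have hτab : τ =ᵐ[μ] A.piecewise a b := by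
    filter_upwards [hSa, hSb] with ω hωa hωb
    by_cases hωA : ω ∈ A <;> simp [τ, hωA, hωa, hωb]
  refine ⟨τ, ⟨hτ, Eventually.of_forall fun ω => ?_⟩, ?_⟩
  · by_cases hωA : ω ∈ A <;> simp [τ, hωA]
  calc μ[φ τ | m] =ᵐ[μ] μ[A.piecewise (φ a) (φ b) | m] :=
        condExp_congr_ae (hφ.ae_eq_piecewise hτ ha hb hτab)
    _ =ᵐ[μ] A.piecewise (μ[φ a | m]) (μ[φ b | m]) :=
        condExp_piecewise (hint a ha) (hint b hb) hS.1.measurableSpace_le hA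
    _ = fun ω => max (μ[φ a | m] ω) (μ[φ b | m] ω) := by
        funext ω
        by_cases hωA : ω ∈ A
        · simpa [hωA] using (show _ ≤ _ from hωA)
        · simpa [hωA] using (le_of_not_ge hωA)

theorem Admissible.directedOn_condExp (hφ : Admissible 𝓕 T μ φ)
    (hint : ∀ τ, MemT0 𝓕 T τ → Integrable (φ τ) μ) {S : Ω → ℝ} (hS : MemT0 𝓕 T S) :
    DirectedOn (fun θ θ' => μ[φ θ | hS.1.measurableSpace] ≤ᵐ[μ] μ[φ θ' | hS.1.measurableSpace])
      {θ | MemT0 𝓕 T θ ∧ S ≤ᵐ[μ] θ} := by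
  rintro a ⟨ha, hSa⟩ b ⟨hb, hSb⟩
  obtain ⟨τ, hτ, hmax⟩ := hφ.exists_condExp_eq_max hint hS ha hb hSa hSb
  refine ⟨τ, hτ, ?_, ?_⟩ <;> filter_upwards [hmax] with ω hω <;> rw [hω]
  exacts [le_max_left _ _, le_max_right _ _]

end Admissible

theorem DownAS.ae_le {m0 : MeasurableSpace Ω} {μ : Measure Ω} {θn : ℕ → Ω → ℝ} {θ : Ω → ℝ}
    (h : DownAS μ θn θ) (n : ℕ) : θ ≤ᵐ[μ] θn n := by
  filter_upwards [h] with ω ⟨hmono, hlim⟩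
  exact (antitone_nat_of_succ_le hmono).le_of_tendsto hlim n

theorem DownAS.max_left {m0 : MeasurableSpace Ω} {μ : Measure Ω} {θn : ℕ → Ω → ℝ}
    {θ σ : Ω → ℝ} (h : DownAS μ θn θ) (hθσ : θ ≤ᵐ[μ] σ) :
    DownAS μ (fun n ω => max (σ ω) (θn n ω)) σ := by
  filter_upwards [h, hθσ] with ω ⟨hmono, hlim⟩ hω
  refine ⟨fun n => max_le_max le_rfl (hmono n), ?_⟩
  simpa only [max_eq_left hω] using (tendsto_const_nhds (x := σ ω)).max hlim

noncomputable def optimalValue {m0 : MeasurableSpace Ω} (𝓕 : Filtration ℝ m0) (T : ℝ)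
    (μ : Measure Ω) (φ : (Ω → ℝ) → Ω → ℝ) (S : Ω → ℝ) : ℝ :=
  sSup ((fun θ => ∫ ω, φ θ ω ∂μ) '' {θ | MemT0 𝓕 T θ ∧ S ≤ᵐ[μ] θ})

section OptimalValue

variable {m0 : MeasurableSpace Ω} {μ : Measure Ω} {𝓕 : Filtration ℝ m0} {T : ℝ}
  {φ : (Ω → ℝ) → Ω → ℝ} {S : Ω → ℝ}

theorem Admissible.bddAbove_integral {Z : Ω → ℝ} (hφ : Admissible 𝓕 T μ φ)
    (hZ : IsEssSupFam μ (MemT0 𝓕 T) φ Z) (hZint : Integrable Z μ) :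
    BddAbove ((fun θ => ∫ ω, φ θ ω ∂μ) '' {θ | MemT0 𝓕 T θ}) := by
  refine ⟨∫ ω, Z ω ∂μ, ?_⟩
  rintro _ ⟨θ, hθ, rfl⟩
  exact integral_mono_ae (hφ.integrable hZ hZint hθ) hZint (hZ.1 θ hθ)

variable (hbdd : BddAbove ((fun θ => ∫ ω, φ θ ω ∂μ) '' {θ | MemT0 𝓕 T θ}))
include hbdd

theorem integral_le_optimalValue {θ : Ω → ℝ} (hθ : MemT0 𝓕 T θ) (hSθ : S ≤ᵐ[μ] θ) :
    ∫ ω, φ θ ω ∂μ ≤ optimalValue 𝓕 T μ φ S :=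
  le_csSup (hbdd.mono (image_mono fun _ h => h.1)) ⟨θ, ⟨hθ, hSθ⟩, rfl⟩

theorem optimalValue_le_of_ae_le {S' : Ω → ℝ} (hS' : MemT0 𝓕 T S') (hSS' : S ≤ᵐ[μ] S') :
    optimalValue 𝓕 T μ φ S' ≤ optimalValue 𝓕 T μ φ S :=
  csSup_le ⟨_, ⟨S', ⟨hS', EventuallyLE.rfl⟩, rfl⟩⟩ <| by
    rintro _ ⟨θ, ⟨hθ, hS'θ⟩, rfl⟩
    exact integral_le_optimalValue hbdd hθ (hSS'.trans hS'θ)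

theorem RCE.tendsto_optimalValue (hφ : RCE 𝓕 T μ φ) (hS : MemT0 𝓕 T S) {Sn : ℕ → Ω → ℝ}
    (hSn : ∀ n, MemT0 𝓕 T (Sn n)) (hdown : DownAS μ Sn S) :
    Tendsto (fun n => optimalValue 𝓕 T μ φ (Sn n)) atTop (𝓝 (optimalValue 𝓕 T μ φ S)) := by
  refine tendsto_order.2 ⟨fun x hx => ?_, fun x hx => Eventually.of_forall fun n =>
    (optimalValue_le_of_ae_le hbdd (hSn n) (hdown.ae_le n)).trans_lt hx⟩
  have hne : {θ | MemT0 𝓕 T θ ∧ S ≤ᵐ[μ] θ}.Nonempty := ⟨S, hS, EventuallyLE.rfl⟩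
  obtain ⟨_, ⟨θ, ⟨hθ, hSθ⟩, rfl⟩, hxθ⟩ := exists_lt_of_lt_csSup (hne.image _) hx
  have hθn : ∀ n, MemT0 𝓕 T fun ω => max (θ ω) (Sn n ω) := fun n => hθ.max (hSn n)
  filter_upwards [(hφ θ hθ _ hθn (hdown.max_left hSθ)).eventually (lt_mem_nhds hxθ)] with n hn
  exact hn.trans_le (integral_le_optimalValue hbdd (hθn n)
    (Eventually.of_forall fun ω => le_max_right _ _))

end OptimalValue

theorem integral_eq_optimalValue {m0 : MeasurableSpace Ω} {μ : Measure Ω}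
    [IsFiniteMeasure μ] {𝓕 : Filtration ℝ m0} {T : ℝ} {φ : (Ω → ℝ) → Ω → ℝ} {Z S v : Ω → ℝ}
    (hφ : Admissible 𝓕 T μ φ) (hZ : IsEssSupFam μ (MemT0 𝓕 T) φ Z) (hZint : Integrable Z μ)
    (hS : MemT0 𝓕 T S)
    (hv : IsEssSupFam μ (fun θ => MemT0 𝓕 T θ ∧ S ≤ᵐ[μ] θ)
      (fun θ => μ[φ θ | hS.1.measurableSpace]) v) :
    ∫ ω, v ω ∂μ = optimalValue 𝓕 T μ φ S := by
  have hint : ∀ τ, MemT0 𝓕 T τ → Integrable (φ τ) μ := fun τ hτ => hφ.integrable hZ hZint hτ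
  rw [hv.integral_eq_sSup_of_directedOn ⟨S, hS, EventuallyLE.rfl⟩
    (fun _ _ => integrable_condExp) (hφ.directedOn_condExp hint hS) integrable_condExp
    fun θ hθ => condExp_mono (hint θ hθ.1) hZint (hZ.1 θ hθ.1)]
  simp only [integral_condExp hS.1.measurableSpace_le]
  rfl

theorem value_family_right_continuous_in_expectation_general
    {m0 : MeasurableSpace Ω} (μ : Measure Ω) [IsProbabilityMeasure μ]
    (𝓕 : Filtration ℝ m0) (T : ℝ)
    (φ : (Ω → ℝ) → Ω → ℝ)
    (hφ : Admissible 𝓕 T μ φ)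
    (Z : Ω → ℝ) (hZ : IsEssSupFam μ (MemT0 𝓕 T) φ Z) (hZint : Integrable Z μ)
    (hφrc : RCE 𝓕 T μ φ)
    (V : (Ω → ℝ) → Ω → ℝ)
    (hV : ∀ S (hS : MemT0 𝓕 T S),
      IsEssSupFam μ (fun θ => MemT0 𝓕 T θ ∧ S ≤ᵐ[μ] θ)
        (fun θ => μ[φ θ | hS.1.measurableSpace]) (V S)) :
    RCE 𝓕 T μ V := by
  intro S hS Sn hSn hdown
  rw [integral_eq_optimalValue hφ hZ hZint hS (hV S hS)]
  exact (hφrc.tendsto_optimalValue (hφ.bddAbove_integral hZ hZint) hS hSn hdown).congr fun n =>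
    (integral_eq_optimalValue hφ hZ hZint (hSn n) (hV _ (hSn n))).symm

/-- If the admissible family `φ` is right continuous along
stopping times in expectation and `E[ess sup_{θ ∈ T_0} φ(θ)] < ∞`, then the
value-function family `{v(S), S ∈ T_0}` is right continuous along stopping times
in expectation. -/
theorem value_family_right_continuous_in_expectation
    {m0 : MeasurableSpace Ω} (μ : Measure Ω) [IsProbabilityMeasure μ]
    (𝓕 : Filtration ℝ m0) (T : ℝ) (hT : 0 ≤ T)
    (hFright : ∀ t : ℝ, 𝓕 t = ⨅ s ∈ Set.Ioi t, 𝓕 s)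
    (hFnull : ∀ A : Set Ω, μ A = 0 → MeasurableSet[𝓕 0] A)
    (φ : (Ω → ℝ) → Ω → ℝ)
    (hφ : Admissible 𝓕 T μ φ)
    (Z : Ω → ℝ) (hZ : IsEssSupFam μ (MemT0 𝓕 T) φ Z) (hZint : Integrable Z μ)
    (hφrc : RCE 𝓕 T μ φ)
    (V : (Ω → ℝ) → Ω → ℝ)
    (hV : ∀ S (hS : MemT0 𝓕 T S),
      IsEssSupFam μ (fun θ => MemT0 𝓕 T θ ∧ S ≤ᵐ[μ] θ)
        (fun θ => μ[φ θ | hS.1.measurableSpace]) (V S)) :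
    RCE 𝓕 T μ V :=
  value_family_right_continuous_in_expectation_general μ 𝓕 T φ hφ Z hZ hZint hφrc V hV
end

section
/- Let {φ(θ), θ ∈ T_0} be an admissible family of nonnegative random variables with E[ess sup_{θ ∈ T_0} φ(θ)] < ∞, let v(S) = ess sup_{θ ∈ T_S} E[φ(θ) | F_S], and fix S ∈ T_0. The set 𝒯_S = {θ ∈ T_S : v(θ) = φ(θ) a.s.} is stable under pairwise minimization (if θ, θ' ∈ 𝒯_S then θ ∧ θ' ∈ 𝒯_S); consequently there exists a nonincreasing sequence (θ_n) in 𝒯_S converging a.s. to θ*(S) := ess inf 𝒯_S, and θ*(S) is a stopping time (an element of T_S). -/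
open MeasureTheory Filter Set Topology

variable {Ω : Type*}

/-!
If `v = φ` at `θ` and at `θ'`, then on `{θ ≤ θ'}` the σ-algebra `F_{θ ∧ θ'}` agrees with `F_θ`,
so for `τ ≥ θ ∧ θ'` we get `E[φ(τ) | F_{θ ∧ θ'}] = E[φ(τ) | F_θ] ≤ v(θ) = φ(θ ∧ θ')` there, and
symmetrically on `{θ' ≤ θ}`; hence `v(θ ∧ θ') = φ(θ ∧ θ')`. A `∧`-stable family of `[0, T]`-valued
variables (here nonempty, since it contains `T`) has as essential infimum the limit of a
nonincreasing sequence in it, obtained by minimising expectations, and for a right-continuous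
filtration an infimum of countably many stopping times is a stopping time.
-/

lemma exists_antitone_le_of_inf_closed {α : Type*} [SemilatticeInf α] {P : α → Prop}
    (hP : ∀ a b, P a → P b → P (a ⊓ b)) (f : ℕ → α) (hf : ∀ n, P (f n)) :
    ∃ g : ℕ → α, (∀ n, P (g n)) ∧ Antitone g ∧ ∀ n, g n ≤ f n := by
  let g : ℕ → α := fun n => Nat.rec (f 0) (fun k gk => gk ⊓ f (k + 1)) n
  refine ⟨g, fun n => ?_, antitone_nat_of_succ_le fun n => inf_le_left, fun n => ?_⟩
  · induction n with
    | zero => exact hf 0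
    | succ k ih => exact hP _ _ ih (hf (k + 1))
  · cases n with
    | zero => exact le_rfl
    | succ k => exact inf_le_right

section EssInf

variable {m0 : MeasurableSpace Ω} {μ : Measure Ω} {P : (Ω → ℝ) → Prop} {C : ℝ}

lemma exists_antitone_tendsto_integral_sInf (hP : ∀ f g, P f → P g → P (f ⊓ g))
    (hne : ∃ f, P f) (hint : ∀ f, P f → Integrable f μ)
    (hbdd : BddBelow ((fun f => ∫ ω, f ω ∂μ) '' {f | P f})) :
    ∃ g : ℕ → Ω → ℝ, (∀ n, P (g n)) ∧ Antitone g ∧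
      Tendsto (fun n => ∫ ω, g n ω ∂μ) atTop
        (𝓝 (sInf ((fun f => ∫ ω, f ω ∂μ) '' {f | P f}))) := by
  obtain ⟨u, -, hu, huP⟩ := exists_seq_tendsto_sInf
    ((show {f | P f}.Nonempty from hne).image fun f => ∫ ω, f ω ∂μ) hbdd
  choose f hfP hfu using huP
  obtain ⟨g, hgP, hg, hgf⟩ := exists_antitone_le_of_inf_closed hP f hfP
  refine ⟨g, hgP, hg, tendsto_of_tendsto_of_tendsto_of_le_of_le tendsto_const_nhds hu
    (fun n => csInf_le hbdd ⟨g n, hgP n, rfl⟩) fun n => ?_⟩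
  rw [← hfu n]
  exact integral_mono (hint _ (hgP n)) (hint _ (hfP n)) (hgf n)

variable [IsFiniteMeasure μ]

lemma tendsto_integral_of_abs_le {F : ℕ → Ω → ℝ} {f : Ω → ℝ} (hF : ∀ n, Measurable (F n))
    (hC : ∀ n ω, |F n ω| ≤ C) (hlim : ∀ ω, Tendsto (fun n => F n ω) atTop (𝓝 (f ω))) :
    Tendsto (fun n => ∫ ω, F n ω ∂μ) atTop (𝓝 (∫ ω, f ω ∂μ)) :=
  tendsto_integral_filter_of_norm_le_const (.of_forall fun n => (hF n).aestronglyMeasurable)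
    ⟨C, .of_forall fun n => ae_of_all _ (hC n)⟩ (ae_of_all _ hlim)

/-- For `f ∈ P` the integral of `f ⊓ g n ∈ P` is at least `c`, so `f ⊓ lim g ≤ lim g` have the
same integral and agree a.e. -/
lemma isEssInfFam_iInf_of_tendsto_integral (hP : ∀ f g, P f → P g → P (f ⊓ g))
    (hmeas : ∀ f, P f → Measurable f) (hC : ∀ f, P f → ∀ ω, |f ω| ≤ C)
    {g : ℕ → Ω → ℝ} (hgP : ∀ n, P (g n)) (hg : Antitone g) {c : ℝ}
    (hc : ∀ f, P f → c ≤ ∫ ω, f ω ∂μ) (hgc : Tendsto (fun n => ∫ ω, g n ω ∂μ) atTop (𝓝 c)) :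
    IsEssInfFam μ P (fun f => f) (fun ω => ⨅ n, g n ω) := by
  set g' : Ω → ℝ := fun ω => ⨅ n, g n ω
  have hbdd : ∀ ω, BddBelow (Set.range fun n => g n ω) := fun ω =>
    ⟨-C, by rintro _ ⟨n, rfl⟩; exact neg_le_of_abs_le (hC _ (hgP n) ω)⟩
  have hlim : ∀ ω, Tendsto (fun n => g n ω) atTop (𝓝 (g' ω)) := fun ω =>
    tendsto_atTop_ciInf (fun _ _ hmn => hg hmn ω) (hbdd ω)
  have hg'meas : Measurable g' := Measurable.iInf fun n => hmeas _ (hgP n)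
  have hg'C : ∀ ω, |g' ω| ≤ C := fun ω => abs_le.2
    ⟨le_ciInf fun n => (abs_le.1 (hC _ (hgP n) ω)).1,
      (ciInf_le (hbdd ω) 0).trans (abs_le.1 (hC _ (hgP 0) ω)).2⟩
  have hint : ∀ f : Ω → ℝ, Measurable f → (∀ ω, |f ω| ≤ C) → Integrable f μ := fun f hf hfC =>
    .of_bound hf.aestronglyMeasurable C (ae_of_all _ hfC)
  have hg'c : ∫ ω, g' ω ∂μ = c :=
    tendsto_nhds_unique (tendsto_integral_of_abs_le (fun n => hmeas _ (hgP n))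
      (fun n => hC _ (hgP n)) hlim) hgc
  refine ⟨fun f hf => ?_, fun w hw => ?_⟩
  · have hfg'C : ∀ ω, |(f ⊓ g') ω| ≤ C := fun ω =>
      (abs_min_le_max_abs_abs).trans (max_le (hC f hf ω) (hg'C ω))
    have hle : c ≤ ∫ ω, (f ⊓ g') ω ∂μ :=
      ge_of_tendsto (tendsto_integral_of_abs_le (fun n => (hmeas f hf).inf (hmeas _ (hgP n)))
        (fun n ω => (abs_min_le_max_abs_abs).trans (max_le (hC f hf ω) (hC _ (hgP n) ω)))
        fun ω => tendsto_const_nhds.min (hlim ω))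
        (.of_forall fun n => hc _ (hP _ _ hf (hgP n)))
    have hfg'_int := hint _ ((hmeas f hf).inf hg'meas) hfg'C
    have heq : f ⊓ g' =ᵐ[μ] g' :=
      (integral_eq_iff_of_ae_le hfg'_int (hint _ hg'meas hg'C)
        (ae_of_all _ fun ω => inf_le_right)).1 (le_antisymm
          (integral_mono hfg'_int (hint _ hg'meas hg'C) fun ω => inf_le_right) (hg'c ▸ hle))
    filter_upwards [heq] with ω hω
    exact hω ▸ inf_le_left
  · filter_upwards [ae_all_iff.2 fun n => hw _ (hgP n)] with ω hω using le_ciInf hω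

lemma exists_antitone_isEssInfFam_iInf (hP : ∀ f g, P f → P g → P (f ⊓ g))
    (hne : ∃ f, P f) (hmeas : ∀ f, P f → Measurable f) (hC : ∀ f, P f → ∀ ω, |f ω| ≤ C) :
    ∃ g : ℕ → Ω → ℝ, (∀ n, P (g n)) ∧ Antitone g ∧
      IsEssInfFam μ P (fun f => f) (fun ω => ⨅ n, g n ω) := by
  have hint : ∀ f, P f → Integrable f μ := fun f hf =>
    .of_bound (hmeas f hf).aestronglyMeasurable C (ae_of_all _ (hC f hf))
  have hbdd : BddBelow ((fun f => ∫ ω, f ω ∂μ) '' {f | P f}) := by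
    refine ⟨∫ _, -C ∂μ, ?_⟩
    rintro _ ⟨f, hf, rfl⟩
    exact integral_mono (integrable_const _) (hint f hf) fun ω => neg_le_of_abs_le (hC f hf ω)
  obtain ⟨g, hgP, hg, hgc⟩ := exists_antitone_tendsto_integral_sInf hP hne hint hbdd
  exact ⟨g, hgP, hg, isEssInfFam_iInf_of_tendsto_integral hP hmeas hC hgP hg
    (fun f hf => csInf_le hbdd ⟨f, hf, rfl⟩) hgc⟩

end EssInf

lemma MeasureTheory.Filtration.isRightContinuous_of_eq_iInf {ι : Type*} [LinearOrder ι]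
    [DenselyOrdered ι] [NoMaxOrder ι] {m0 : MeasurableSpace Ω} {𝓕 : Filtration ι m0}
    (h𝓕 : ∀ t, 𝓕 t = ⨅ s ∈ Set.Ioi t, 𝓕 s) : 𝓕.IsRightContinuous :=
  ⟨fun t => (𝓕.rightCont_eq t).trans_le (h𝓕 t).ge⟩

lemma MeasureTheory.isStoppingTime_coe_ciInf {ι : Type*} [ConditionallyCompleteLinearOrder ι]
    [TopologicalSpace ι] [OrderTopology ι] [DenselyOrdered ι] [FirstCountableTopology ι]
    [NoMaxOrder ι] {m0 : MeasurableSpace Ω} {𝓕 : Filtration ι m0} [𝓕.IsRightContinuous]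
    {τ : ℕ → Ω → ι} (hτ : ∀ n, IsStoppingTime 𝓕 fun ω => (τ n ω : WithTop ι))
    (hbdd : ∀ ω, BddBelow (Set.range fun n => τ n ω)) :
    IsStoppingTime 𝓕 fun ω => ((⨅ n, τ n ω : ι) : WithTop ι) := by
  refine isStoppingTime_of_measurableSet_lt_of_isRightContinuous fun t => ?_
  have hset : {ω | ((⨅ n, τ n ω : ι) : WithTop ι) < t} = ⋃ n, {ω | (τ n ω : WithTop ι) < t} := by
    ext ω
    simp [ciInf_lt_iff (hbdd ω)]
  rw [hset]
  exact .iUnion fun n => (hτ n).measurableSet_lt t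

lemma MeasureTheory.IsStoppingTime.condExp_ae_eq_restrict_of_eq_min {ι : Type*} [LinearOrder ι]
    [TopologicalSpace ι] [OrderTopology ι] [SecondCountableTopology ι] {m0 : MeasurableSpace Ω}
    {μ : Measure Ω} [IsFiniteMeasure μ] {𝓕 : Filtration ι m0} {τ σ π : Ω → WithTop ι}
    (hτ : IsStoppingTime 𝓕 τ) (hσ : IsStoppingTime 𝓕 σ) (hπ : IsStoppingTime 𝓕 π)
    (hmin : ∀ ω, π ω = min (τ ω) (σ ω)) (f : Ω → ℝ) :
    μ[f | hπ.measurableSpace] =ᵐ[μ.restrict {ω | τ ω ≤ σ ω}] μ[f | hτ.measurableSpace] := by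
  obtain rfl : π = fun ω => min (τ ω) (σ ω) := funext hmin
  exact condExp_min_stopping_time_ae_eq_restrict_le hτ hσ

lemma MeasureTheory.condExp_ae_eq_restrict_of_ae_eq_restrict {m m0 : MeasurableSpace Ω}
    {μ : Measure Ω} (hm : m ≤ m0) [SigmaFinite (μ.trim hm)] {s : Set Ω} (hs : MeasurableSet[m] s)
    {f g : Ω → ℝ} (hf : Integrable f μ) (hg : Integrable g μ) (hfg : f =ᵐ[μ.restrict s] g) :
    μ[f | m] =ᵐ[μ.restrict s] μ[g | m] := by
  have hzero : μ[f - g | m] =ᵐ[μ.restrict s] 0 :=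
    condExp_ae_eq_restrict_zero hs (hfg.mono fun ω h => sub_eq_zero.2 h)
  filter_upwards [hzero, ae_restrict_of_ae (condExp_sub hf hg m)] with ω h0 hsub
  rw [hsub] at h0
  exact sub_eq_zero.1 h0


namespace MemT0

variable {m0 : MeasurableSpace Ω} {𝓕 : Filtration ℝ m0} {T : ℝ} {θ θ' : Ω → ℝ}

lemma measurable (hθ : MemT0 𝓕 T θ) : Measurable θ := by
  simpa using hθ.1.measurable'.untopD 0

lemma abs_le (hθ : MemT0 𝓕 T θ) (ω : Ω) : |θ ω| ≤ T :=
  _root_.abs_le.2 ⟨by linarith [(hθ.2 ω).1, (hθ.2 ω).2], (hθ.2 ω).2⟩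

lemma const {t : ℝ} (ht : t ∈ Set.Icc 0 T) : MemT0 𝓕 T fun _ => t :=
  ⟨isStoppingTime_const 𝓕 t, fun _ => ht⟩

lemma inf (hθ : MemT0 𝓕 T θ) (hθ' : MemT0 𝓕 T θ') : MemT0 𝓕 T (θ ⊓ θ') :=
  ⟨by simpa using hθ.1.min hθ'.1, fun ω =>
    ⟨le_min (hθ.2 ω).1 (hθ'.2 ω).1, (min_le_left _ _).trans (hθ.2 ω).2⟩⟩

lemma sup (hθ : MemT0 𝓕 T θ) (hθ' : MemT0 𝓕 T θ') : MemT0 𝓕 T (θ ⊔ θ') :=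
  ⟨by simpa using hθ.1.max hθ'.1, fun ω =>
    ⟨(hθ.2 ω).1.trans (le_max_left _ _), max_le (hθ.2 ω).2 (hθ'.2 ω).2⟩⟩

lemma iInf [𝓕.IsRightContinuous] {θ : ℕ → Ω → ℝ} (hθ : ∀ n, MemT0 𝓕 T (θ n)) :
    MemT0 𝓕 T fun ω => ⨅ n, θ n ω := by
  have hbdd : ∀ ω, BddBelow (Set.range fun n => θ n ω) := fun ω =>
    ⟨0, by rintro _ ⟨n, rfl⟩; exact ((hθ n).2 ω).1⟩
  exact ⟨isStoppingTime_coe_ciInf (fun n => (hθ n).1) hbdd, fun ω =>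
    ⟨le_ciInf fun n => ((hθ n).2 ω).1, (ciInf_le (hbdd ω) 0).trans ((hθ 0).2 ω).2⟩⟩

end MemT0

/-- The paper's value family `v(S) = ess sup_{θ ∈ T_S} E[φ(θ) | F_S]`. -/
def IsValueFamily {m0 : MeasurableSpace Ω} (𝓕 : Filtration ℝ m0) (T : ℝ) (μ : Measure Ω)
    (φ V : (Ω → ℝ) → Ω → ℝ) : Prop :=
  ∀ S (hS : MemT0 𝓕 T S), IsEssSupFam μ (fun θ => MemT0 𝓕 T θ ∧ S ≤ᵐ[μ] θ)
    (fun θ => μ[φ θ | hS.1.measurableSpace]) (V S)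

namespace Admissible

variable {m0 : MeasurableSpace Ω} {μ : Measure Ω} {𝓕 : Filtration ℝ m0} {T : ℝ}
  {φ V : (Ω → ℝ) → Ω → ℝ} {θ θ' ν σ τ : Ω → ℝ}

lemma integrable_of_isEssSupFam (hφ : Admissible 𝓕 T μ φ) {Z : Ω → ℝ}
    (hZ : IsEssSupFam μ (MemT0 𝓕 T) φ Z) (hZint : Integrable Z μ) (hτ : MemT0 𝓕 T τ) :
    Integrable (φ τ) μ := by
  refine hZint.mono' (((hφ.1 τ hτ).1.mono hτ.1.measurableSpace_le le_rfl).aestronglyMeasurable) ?_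
  filter_upwards [hZ.1 τ hτ] with ω h
  rwa [Real.norm_eq_abs, abs_of_nonneg ((hφ.1 τ hτ).2 ω)]

variable [IsFiniteMeasure μ]

lemma condExp_eq (hφ : Admissible 𝓕 T μ φ) (hτ : MemT0 𝓕 T τ) (hint : Integrable (φ τ) μ) :
    μ[φ τ | hτ.1.measurableSpace] = φ τ :=
  condExp_of_stronglyMeasurable hτ.1.measurableSpace_le (hφ.1 τ hτ).1.stronglyMeasurable hint

lemma ae_le_value (hφ : Admissible 𝓕 T μ φ) (hV : IsValueFamily 𝓕 T μ φ V)
    (hτ : MemT0 𝓕 T τ) (hint : Integrable (φ τ) μ) : φ τ ≤ᵐ[μ] V τ :=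
  hφ.condExp_eq hτ hint ▸ (hV τ hτ).1 τ ⟨hτ, .rfl⟩

lemma value_const_ae_eq (hφ : Admissible 𝓕 T μ φ)
    (hint : ∀ τ, MemT0 𝓕 T τ → Integrable (φ τ) μ) (hV : IsValueFamily 𝓕 T μ φ V)
    (hT : 0 ≤ T) : V (fun _ => T) =ᵐ[μ] φ (fun _ => T) := by
  have hTm : MemT0 𝓕 T fun _ => T := .const ⟨hT, le_rfl⟩
  refine EventuallyLE.antisymm ((hV _ hTm).2 _ ?_) (hφ.ae_le_value hV hTm (hint _ hTm))
  rintro τ ⟨hτ, hTτ⟩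
  have hτT : φ τ =ᵐ[μ] φ (fun _ => T) := by
    filter_upwards [hφ.2 τ _ hτ hTm, hTτ] with ω h hω
    exact h (le_antisymm (hτ.2 ω).2 hω)
  have hce := condExp_congr_ae (m := hTm.1.measurableSpace) hτT
  rw [hφ.condExp_eq hTm (hint _ hTm)] at hce
  exact hce.le

/-- On `{θ ≤ σ}`, `φ σ = φ (σ ⊔ θ)`, and `E[φ (σ ⊔ θ) | F_θ] ≤ V θ = φ θ`. -/
lemma condExp_le_of_value_ae_eq (hφ : Admissible 𝓕 T μ φ)
    (hint : ∀ τ, MemT0 𝓕 T τ → Integrable (φ τ) μ) (hV : IsValueFamily 𝓕 T μ φ V)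
    (hθ : MemT0 𝓕 T θ) (hVθ : V θ =ᵐ[μ] φ θ) (hσ : MemT0 𝓕 T σ) :
    ∀ᵐ ω ∂μ, θ ω ≤ σ ω → μ[φ σ | hθ.1.measurableSpace] ω ≤ φ θ ω := by
  have hρ : MemT0 𝓕 T (σ ⊔ θ) := hσ.sup hθ
  have hA : MeasurableSet[hθ.1.measurableSpace] {ω | θ ω ≤ σ ω} := by
    simpa using hθ.1.measurableSet_le_stopping_time hσ.1
  have hA₀ := hθ.1.measurableSpace_le _ hA
  have hσρ : φ σ =ᵐ[μ.restrict {ω | θ ω ≤ σ ω}] φ (σ ⊔ θ) := by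
    refine (ae_restrict_iff' hA₀).2 ?_
    filter_upwards [hφ.2 σ _ hσ hρ] with ω h hω
    exact h (max_eq_left hω).symm
  have hce := (ae_restrict_iff' hA₀).1 <| condExp_ae_eq_restrict_of_ae_eq_restrict
    hθ.1.measurableSpace_le hA (hint σ hσ) (hint _ hρ) hσρ
  filter_upwards [hce, (hV θ hθ).1 _ ⟨hρ, ae_of_all _ fun ω => le_max_right _ _⟩, hVθ]
    with ω hce hρV hVθ hω
  calc μ[φ σ | hθ.1.measurableSpace] ω = μ[φ (σ ⊔ θ) | hθ.1.measurableSpace] ω := hce hω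
    _ ≤ V θ ω := hρV
    _ = φ θ ω := hVθ

/-- On `{θ ≤ θ'}`, conditioning on `F_ν` with `ν = θ ∧ θ'` is conditioning on `F_θ`. -/
lemma condExp_le_of_value_ae_eq_of_eq_min (hφ : Admissible 𝓕 T μ φ)
    (hint : ∀ τ, MemT0 𝓕 T τ → Integrable (φ τ) μ) (hV : IsValueFamily 𝓕 T μ φ V)
    (hθ : MemT0 𝓕 T θ) (hθ' : MemT0 𝓕 T θ') (hVθ : V θ =ᵐ[μ] φ θ)
    (hν : MemT0 𝓕 T ν) (hmin : ∀ ω, ν ω = min (θ ω) (θ' ω))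
    (hτ : MemT0 𝓕 T τ) (hντ : ν ≤ᵐ[μ] τ) :
    ∀ᵐ ω ∂μ, θ ω ≤ θ' ω → μ[φ τ | hν.1.measurableSpace] ω ≤ φ ν ω := by
  have hloc := hθ.1.condExp_ae_eq_restrict_of_eq_min (μ := μ) hθ'.1 hν.1 (by simp [hmin]) (φ τ)
  have hA : MeasurableSet {ω | (θ ω : WithTop ℝ) ≤ θ' ω} :=
    hθ.1.measurableSpace_le _ (hθ.1.measurableSet_le_stopping_time hθ'.1)
  filter_upwards [(ae_restrict_iff' hA).1 hloc, hφ.condExp_le_of_value_ae_eq hint hV hθ hVθ hτ,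
    hφ.2 θ ν hθ hν, hντ] with ω hloc hle hθν hντ hθθ'
  have hνθ : ν ω = θ ω := (hmin ω).trans (min_eq_left hθθ')
  rw [hloc (by simpa using hθθ'), ← hθν hνθ.symm]
  exact hle (hνθ ▸ hντ)

lemma value_inf_ae_eq (hφ : Admissible 𝓕 T μ φ)
    (hint : ∀ τ, MemT0 𝓕 T τ → Integrable (φ τ) μ) (hV : IsValueFamily 𝓕 T μ φ V)
    (hθ : MemT0 𝓕 T θ) (hθ' : MemT0 𝓕 T θ') (hVθ : V θ =ᵐ[μ] φ θ)
    (hVθ' : V θ' =ᵐ[μ] φ θ') : V (θ ⊓ θ') =ᵐ[μ] φ (θ ⊓ θ') := by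
  have hν := hθ.inf hθ'
  refine EventuallyLE.antisymm ((hV _ hν).2 _ ?_) (hφ.ae_le_value hV hν (hint _ hν))
  rintro τ ⟨hτ, hντ⟩
  filter_upwards [hφ.condExp_le_of_value_ae_eq_of_eq_min hint hV hθ hθ' hVθ hν
      (fun _ => rfl) hτ hντ,
    hφ.condExp_le_of_value_ae_eq_of_eq_min hint hV hθ' hθ hVθ' hν
      (fun _ => min_comm _ _) hτ hντ] with ω h h'
  exact (le_total (θ ω) (θ' ω)).elim h h'

end Admissible

theorem essinf_of_coincidence_set_is_stopping_time_general
    {m0 : MeasurableSpace Ω} (μ : Measure Ω) [IsProbabilityMeasure μ]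
    (𝓕 : Filtration ℝ m0) (T : ℝ) (hT : 0 ≤ T)
    (hFright : ∀ t : ℝ, 𝓕 t = ⨅ s ∈ Set.Ioi t, 𝓕 s)
    (φ : (Ω → ℝ) → Ω → ℝ)
    (hφ : Admissible 𝓕 T μ φ)
    (Z : Ω → ℝ) (hZ : IsEssSupFam μ (MemT0 𝓕 T) φ Z) (hZint : Integrable Z μ)
    (V : (Ω → ℝ) → Ω → ℝ)
    (hV : ∀ S (hS : MemT0 𝓕 T S),
      IsEssSupFam μ (fun θ => MemT0 𝓕 T θ ∧ S ≤ᵐ[μ] θ)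
        (fun θ => μ[φ θ | hS.1.measurableSpace]) (V S))
    (S : Ω → ℝ) (hS : MemT0 𝓕 T S) :
    (∀ θ θ', (MemT0 𝓕 T θ ∧ S ≤ᵐ[μ] θ ∧ V θ =ᵐ[μ] φ θ) →
        (MemT0 𝓕 T θ' ∧ S ≤ᵐ[μ] θ' ∧ V θ' =ᵐ[μ] φ θ') →
        (MemT0 𝓕 T (fun ω => min (θ ω) (θ' ω)) ∧
          S ≤ᵐ[μ] (fun ω => min (θ ω) (θ' ω)) ∧
          V (fun ω => min (θ ω) (θ' ω)) =ᵐ[μ] φ (fun ω => min (θ ω) (θ' ω)))) ∧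
    ∃ θstar : Ω → ℝ,
      IsEssInfFam μ (fun θ => MemT0 𝓕 T θ ∧ S ≤ᵐ[μ] θ ∧ V θ =ᵐ[μ] φ θ)
        (fun θ => θ) θstar ∧
      MemT0 𝓕 T θstar ∧ S ≤ᵐ[μ] θstar ∧
      ∃ θn : ℕ → Ω → ℝ,
        (∀ n, MemT0 𝓕 T (θn n) ∧ S ≤ᵐ[μ] θn n ∧ V (θn n) =ᵐ[μ] φ (θn n)) ∧
        (∀ n ω, θn (n + 1) ω ≤ θn n ω) ∧
        ∀ᵐ ω ∂μ, Filter.Tendsto (fun n => θn n ω) Filter.atTop (nhds (θstar ω)) := by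
  have hint : ∀ τ, MemT0 𝓕 T τ → Integrable (φ τ) μ := fun τ hτ =>
    hφ.integrable_of_isEssSupFam hZ hZint hτ
  have hstab : ∀ θ θ', (MemT0 𝓕 T θ ∧ S ≤ᵐ[μ] θ ∧ V θ =ᵐ[μ] φ θ) →
      (MemT0 𝓕 T θ' ∧ S ≤ᵐ[μ] θ' ∧ V θ' =ᵐ[μ] φ θ') →
      (MemT0 𝓕 T (θ ⊓ θ') ∧ S ≤ᵐ[μ] θ ⊓ θ' ∧ V (θ ⊓ θ') =ᵐ[μ] φ (θ ⊓ θ')) := by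
    rintro θ θ' ⟨hθ, hSθ, hVθ⟩ ⟨hθ', hSθ', hVθ'⟩
    exact ⟨hθ.inf hθ', hSθ.le_inf hSθ', hφ.value_inf_ae_eq hint hV hθ hθ' hVθ hVθ'⟩
  refine ⟨hstab, ?_⟩
  have := Filtration.isRightContinuous_of_eq_iInf hFright
  obtain ⟨θn, hθnP, hθn, hess⟩ := exists_antitone_isEssInfFam_iInf (μ := μ) (C := T)
    (P := fun θ => MemT0 𝓕 T θ ∧ S ≤ᵐ[μ] θ ∧ V θ =ᵐ[μ] φ θ) hstab
    ⟨_, .const ⟨hT, le_rfl⟩, ae_of_all _ fun ω => (hS.2 ω).2, hφ.value_const_ae_eq hint hV hT⟩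
    (fun θ hθ => hθ.1.measurable) (fun θ hθ => hθ.1.abs_le)
  refine ⟨_, hess, .iInf fun n => (hθnP n).1, hess.2 S fun θ hθ => hθ.2.1, θn, hθnP,
    fun n ω => hθn n.le_succ ω, ae_of_all _ fun ω => tendsto_atTop_ciInf (fun m n h => hθn h ω)
      ⟨0, by rintro _ ⟨n, rfl⟩; exact ((hθnP n).1.2 ω).1⟩⟩

/-- The set `𝒯_S = {θ ∈ T_S : v(θ) = φ(θ) a.s.}` is stable under
pairwise minimization, and there is a version `θ*(S)` of `ess inf 𝒯_S` which is a
stopping time of `T_S` and the a.s. limit of a nonincreasing sequence in `𝒯_S`. -/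
theorem essinf_of_coincidence_set_is_stopping_time
    {m0 : MeasurableSpace Ω} (μ : Measure Ω) [IsProbabilityMeasure μ]
    (𝓕 : Filtration ℝ m0) (T : ℝ) (hT : 0 ≤ T)
    (hFright : ∀ t : ℝ, 𝓕 t = ⨅ s ∈ Set.Ioi t, 𝓕 s)
    (hFnull : ∀ A : Set Ω, μ A = 0 → MeasurableSet[𝓕 0] A)
    (φ : (Ω → ℝ) → Ω → ℝ)
    (hφ : Admissible 𝓕 T μ φ)
    (Z : Ω → ℝ) (hZ : IsEssSupFam μ (MemT0 𝓕 T) φ Z) (hZint : Integrable Z μ)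
    (V : (Ω → ℝ) → Ω → ℝ)
    (hV : ∀ S (hS : MemT0 𝓕 T S),
      IsEssSupFam μ (fun θ => MemT0 𝓕 T θ ∧ S ≤ᵐ[μ] θ)
        (fun θ => μ[φ θ | hS.1.measurableSpace]) (V S))
    (S : Ω → ℝ) (hS : MemT0 𝓕 T S) :
    (∀ θ θ', (MemT0 𝓕 T θ ∧ S ≤ᵐ[μ] θ ∧ V θ =ᵐ[μ] φ θ) →
        (MemT0 𝓕 T θ' ∧ S ≤ᵐ[μ] θ' ∧ V θ' =ᵐ[μ] φ θ') →
        (MemT0 𝓕 T (fun ω => min (θ ω) (θ' ω)) ∧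
          S ≤ᵐ[μ] (fun ω => min (θ ω) (θ' ω)) ∧
          V (fun ω => min (θ ω) (θ' ω)) =ᵐ[μ] φ (fun ω => min (θ ω) (θ' ω)))) ∧
    ∃ θstar : Ω → ℝ,
      IsEssInfFam μ (fun θ => MemT0 𝓕 T θ ∧ S ≤ᵐ[μ] θ ∧ V θ =ᵐ[μ] φ θ)
        (fun θ => θ) θstar ∧
      MemT0 𝓕 T θstar ∧ S ≤ᵐ[μ] θstar ∧
      ∃ θn : ℕ → Ω → ℝ,
        (∀ n, MemT0 𝓕 T (θn n) ∧ S ≤ᵐ[μ] θn n ∧ V (θn n) =ᵐ[μ] φ (θn n)) ∧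
        (∀ n ω, θn (n + 1) ω ≤ θn n ω) ∧
        ∀ᵐ ω ∂μ, Filter.Tendsto (fun n => θn n ω) Filter.atTop (nhds (θstar ω)) :=
  essinf_of_coincidence_set_is_stopping_time_general μ 𝓕 T hT hFright φ hφ Z hZ hZint V hV S hS
end
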